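/- For E > 2 set α := √(E − (1+√5)/2) and β := √(E − (1−√5)/2), and consider the 4×4 real matrix with rows (−(2+2√5)/α, (2+2√5)/α, −β(1+√5)/8, β(95−29√5)/8), ((−22+10√5)/α, (22−10√5)/α, β(125−41√5)/8, β(11−5√5)/8), (22−10√5, −2−2√5, β²(125−41√5)/8, β²(95−29√5)/8), (−(2+2√5)/α², (22−10√5)/α², (1+√5)/8, (−11+5√5)/8). Then the set of E ∈ (2, ∞) for which this matrix is singular (has determinant zero) has no accumulation point in (2, ∞); equivalently, for all E > 2 outside a discrete subset of (2, ∞), its four columns are linearly independent in ℝ⁴. (Step 6 of the proof of Proposition 4.2.) -/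

import Mathlib

open Matrix Real Filter

noncomputable section

/-- α(E) = √(E − (1+√5)/2). -/
def alpha (E : ℝ) : ℝ := Real.sqrt (E - (1 + Real.sqrt 5) / 2)

/-- β(E) = √(E − (1−√5)/2). -/
def beta (E : ℝ) : ℝ := Real.sqrt (E - (1 - Real.sqrt 5) / 2)

/-- The 4×4 matrix of Step 6 of the proof of Proposition 4.2. -/
def step6Matrix (E : ℝ) : Matrix (Fin 4) (Fin 4) ℝ :=
  !![-(2 + 2 * Real.sqrt 5) / alpha E, (2 + 2 * Real.sqrt 5) / alpha E,
       -(beta E * (1 + Real.sqrt 5)) / 8, beta E * (95 - 29 * Real.sqrt 5) / 8;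
     (-22 + 10 * Real.sqrt 5) / alpha E, (22 - 10 * Real.sqrt 5) / alpha E,
       beta E * (125 - 41 * Real.sqrt 5) / 8, beta E * (11 - 5 * Real.sqrt 5) / 8;
     22 - 10 * Real.sqrt 5, -2 - 2 * Real.sqrt 5,
       (beta E) ^ 2 * (125 - 41 * Real.sqrt 5) / 8, (beta E) ^ 2 * (95 - 29 * Real.sqrt 5) / 8;
     -(2 + 2 * Real.sqrt 5) / (alpha E) ^ 2, (22 - 10 * Real.sqrt 5) / (alpha E) ^ 2,
       (1 + Real.sqrt 5) / 8, (-11 + 5 * Real.sqrt 5) / 8]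

/-- General determinant formula: the Step 6 matrix with `u = 1/α` has a closed-form
determinant as a polynomial in `b * u`, assuming only `s² = 5`. -/
lemma step6_det_key (s u b : ℝ) (hs : s ^ 2 = 5) :
    (!![-(2 + 2 * s) * u, (2 + 2 * s) * u,
       -(b * (1 + s)) / 8, b * (95 - 29 * s) / 8;
     (-22 + 10 * s) * u, (22 - 10 * s) * u,
       b * (125 - 41 * s) / 8, b * (11 - 5 * s) / 8;
     22 - 10 * s, -2 - 2 * s,
       b ^ 2 * (125 - 41 * s) / 8, b ^ 2 * (95 - 29 * s) / 8;
     -(2 + 2 * s) * u ^ 2, (22 - 10 * s) * u ^ 2,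
       (1 + s) / 8, (-11 + 5 * s) / 8] : Matrix (Fin 4) (Fin 4) ℝ).det
    = (1560 - 698 * s) * (b * u) + (237352 * s - 530080) * (b * u) ^ 2
      + (238050 * s - 531640) * (b * u) ^ 3 := by
  simp [Matrix.det_succ_row_zero, Fin.sum_univ_succ, Fin.succAbove, Fin.castSucc,
    Fin.castAdd, Fin.castLE, Fin.succ]
  linear_combination (((1479:ℝ)/4)*u^1*b^1 + (-88187:ℝ)*u^2*b^2 + ((-354227:ℝ)/4)*u^3*b^3 +
    ((-659:ℝ)/4)*s^1*u^1*b^1 + (19559:ℝ)*s^1*u^2*b^2 + ((78895:ℝ)/4)*s^1*u^3*b^3 +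
    (30:ℝ)*s^2*u^1*b^1 + (-1776:ℝ)*s^2*u^2*b^2 + (-1806:ℝ)*s^2*u^3*b^3) * hs

lemma step6_det_ne_zero {E : ℝ} (hE : 2 < E) : (step6Matrix E).det ≠ 0 := by
  have hs : (Real.sqrt 5) ^ 2 = 5 := Real.sq_sqrt (by norm_num)
  have hs0 : (0:ℝ) ≤ Real.sqrt 5 := Real.sqrt_nonneg 5
  have hslb : (2.236 : ℝ) < Real.sqrt 5 := by nlinarith
  have hsub : Real.sqrt 5 < 2.2361 := by nlinarith
  set s := Real.sqrt 5 with hsdef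
  -- positivity of alpha and beta
  have hap : 0 < E - (1 + s) / 2 := by nlinarith
  have hbp : 0 < E - (1 - s) / 2 := by nlinarith
  have ha : 0 < alpha E := Real.sqrt_pos.mpr hap
  have hb : 0 < beta E := Real.sqrt_pos.mpr hbp
  have hab : alpha E < beta E := Real.sqrt_lt_sqrt (le_of_lt hap) (by nlinarith)
  set a := alpha E
  set b := beta E
  have ha' : a ≠ 0 := ne_of_gt ha
  -- rewrite divisions as multiplications by u := a⁻¹
  have hM : step6Matrix E =
      !![-(2 + 2 * s) * a⁻¹, (2 + 2 * s) * a⁻¹,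
       -(b * (1 + s)) / 8, b * (95 - 29 * s) / 8;
     (-22 + 10 * s) * a⁻¹, (22 - 10 * s) * a⁻¹,
       b * (125 - 41 * s) / 8, b * (11 - 5 * s) / 8;
     22 - 10 * s, -2 - 2 * s,
       b ^ 2 * (125 - 41 * s) / 8, b ^ 2 * (95 - 29 * s) / 8;
     -(2 + 2 * s) * a⁻¹ ^ 2, (22 - 10 * s) * a⁻¹ ^ 2,
       (1 + s) / 8, (-11 + 5 * s) / 8] := by
    unfold step6Matrix
    congr 1; field_simp
    simp only [hsdef, mul_comm]
    rfl
  rw [hM, step6_det_key s a⁻¹ b hs]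
  have hu : 0 < a⁻¹ := inv_pos.mpr ha
  have ht : 1 < b * a⁻¹ := by
    rw [← div_eq_mul_inv]
    exact (one_lt_div ha).mpr hab
  set t := b * a⁻¹ with htdef
  have h2 : 0 < 237352 * s - 530080 := by nlinarith
  have h3 : 0 < 238050 * s - 531640 := by nlinarith
  have hsum : 0 < (1560 - 698 * s) + (237352 * s - 530080) + (238050 * s - 531640) := by nlinarith
  have ht0 : 0 < t := lt_trans one_pos ht
  have h4 : t < t ^ 2 := by nlinarith
  have h5 : t < t ^ 3 := by nlinarith [mul_pos ht0 ht0]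
  have : 0 < (1560 - 698 * s) * t + (237352 * s - 530080) * t ^ 2
      + (238050 * s - 531640) * t ^ 3 := by
    nlinarith [mul_pos h2 (sub_pos.mpr h4), mul_pos h3 (sub_pos.mpr h5), mul_pos hsum ht0]
  exact ne_of_gt this

theorem step6_determinant_zeros_discrete :
    ∀ x ∈ Set.Ioi (2 : ℝ),
      ¬ AccPt x (Filter.principal {E : ℝ | 2 < E ∧ (step6Matrix E).det = 0}) := by
  intro x _
  have h : {E : ℝ | 2 < E ∧ (step6Matrix E).det = 0} = ∅ := by
    ext E
    simp only [Set.mem_setOf_eq, Set.mem_empty_iff_false, iff_false, not_and]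
    exact fun hE => step6_det_ne_zero hE
  rw [h]
  simp [AccPt]
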